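/- Let Γ be a finite simplicial graph and 𝒢 = (G_v)_{v∈V} a family of nontrivial groups. Let Λ₁, Λ₂ ⊆ V and g ∈ Γ𝒢. If ⟨Λ₁⟩ ⊆ g ⟨Λ₂⟩ g⁻¹, then Λ₁ ⊆ Λ₂ and g belongs to the set product ⟨Λ₁⟩ · ⟨link(Λ₁)⟩ · ⟨Λ₂⟩, where link(Λ₁) = {w ∈ V : w is adjacent to every vertex of Λ₁}. -/

import Mathlib

open scoped Pointwise

section GraphProductDefs

variable {V : Type} (Γ : SimpleGraph V) (G : V → Type) [∀ v, Group (G v)]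

/-- The set of commutation relators defining the graph product of the family `G` over `Γ`. -/
def graphProductRels : Set (Monoid.CoprodI G) :=
  { x | ∃ (u v : V) (g : G u) (h : G v), Γ.Adj u v ∧
      x = Monoid.CoprodI.of g * Monoid.CoprodI.of h *
        (Monoid.CoprodI.of g)⁻¹ * (Monoid.CoprodI.of h)⁻¹ }

/-- The graph product of the family `G` over the simplicial graph `Γ`. -/
abbrev GraphProduct : Type :=
  Monoid.CoprodI G ⧸ Subgroup.normalClosure (graphProductRels Γ G)

/-- The canonical map from a vertex group to the graph product. -/
def GraphProduct.of (v : V) : G v →* GraphProduct Γ G :=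
  (QuotientGroup.mk' (Subgroup.normalClosure (graphProductRels Γ G))).comp Monoid.CoprodI.of

/-- The image `Ĝ_v` of a vertex group in the graph product. -/
def vertexSubgroup (v : V) : Subgroup (GraphProduct Γ G) :=
  (GraphProduct.of Γ G v).range

/-- The subgroup `⟨Λ⟩` generated by the vertex groups with vertices in `Λ`. -/
def spanSubgroup (Λ : Set V) : Subgroup (GraphProduct Γ G) :=
  ⨆ v ∈ Λ, vertexSubgroup Γ G v

/-- The star of a vertex: the vertex together with its neighbours. -/
def starSet (u : V) : Set V := insert u {w | Γ.Adj u w}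

/-- `Λ` is a connected component of the subgraph of `Γ` induced on `S`: it is a nonempty
connected subset of `S` closed under adjacency within `S`. -/
def IsConnCompOf (S Λ : Set V) : Prop :=
  Λ.Nonempty ∧ Λ ⊆ S ∧ (Γ.induce Λ).Connected ∧
    ∀ a ∈ Λ, ∀ b ∈ S, Γ.Adj a b → b ∈ Λ

/-- A local automorphism: permutes the vertex subgroups according to a graph automorphism. -/
def IsLocalAut (φ : MulAut (GraphProduct Γ G)) : Prop :=
  ∃ σ : Γ ≃g Γ, ∀ v : V,
    Subgroup.map φ.toMonoidHom (vertexSubgroup Γ G v) = vertexSubgroup Γ G (σ v)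

/-- A partial conjugation: conjugates the vertex groups of a connected component `Λ` of the
graph induced on the complement of the star of `u` by an element `h ∈ Ĝ_u`, and fixes the
other vertex groups pointwise. -/
def IsPartialConj (φ : MulAut (GraphProduct Γ G)) : Prop :=
  ∃ (u : V) (Λ : Set V) (h : GraphProduct Γ G),
    h ∈ vertexSubgroup Γ G u ∧
    IsConnCompOf Γ {w | w ∉ starSet Γ u} Λ ∧
    (∀ w ∈ Λ, ∀ x ∈ vertexSubgroup Γ G w, φ x = h * x * h⁻¹) ∧
    (∀ w, w ∉ Λ → ∀ x ∈ vertexSubgroup Γ G w, φ x = x)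

/-- The subgroup of `Aut(Γ𝒢)` generated by local automorphisms and partial conjugations. -/
def ConjP : Subgroup (MulAut (GraphProduct Γ G)) :=
  Subgroup.closure {φ | IsLocalAut Γ G φ ∨ IsPartialConj Γ G φ}

/-- A conjugating automorphism: sends each vertex subgroup to a conjugate of a vertex
subgroup. -/
def IsConjugating (φ : MulAut (GraphProduct Γ G)) : Prop :=
  ∀ v : V, ∃ (w : V) (g : GraphProduct Γ G),
    Subgroup.map φ.toMonoidHom (vertexSubgroup Γ G v) =
      Subgroup.map (MulAut.conj g).toMonoidHom (vertexSubgroup Γ G w)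

end GraphProductDefs

section Extra

variable {V : Type} (Γ : SimpleGraph V) (G : V → Type) [∀ v, Group (G v)]

/-- The Cayley graph `X(Γ,𝒢)` of the graph product with respect to the union of the
(nontrivial elements of the) vertex subgroups. -/
def cayley : SimpleGraph (GraphProduct Γ G) where
  Adj x y := x ≠ y ∧ ∃ v : V, x⁻¹ * y ∈ vertexSubgroup Γ G v
  symm := ⟨by
    rintro x y ⟨hxy, v, hv⟩
    exact ⟨hxy.symm, v, by simpa using (vertexSubgroup Γ G v).inv_mem hv⟩⟩
  loopless := ⟨fun x h => h.1 rfl⟩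

/-- A molecular graph: finite, connected, minimal degree at least 2, girth at least 5. -/
def Molecular : Prop :=
  Γ.Connected ∧ (∀ v : V, 2 ≤ (Γ.neighborSet v).ncard) ∧ 5 ≤ Γ.girth

/-- An atomic graph: molecular, and the subgraph induced on the complement of each star is
nonempty and connected. -/
def Atomic : Prop :=
  Molecular Γ ∧ ∀ u : V, {w | w ∉ starSet Γ u}.Nonempty ∧
    (Γ.induce {w | w ∉ starSet Γ u}).Connected

/-- The link of a set of vertices: the vertices adjacent to every vertex of the set. -/
def linkSet (Λ : Set V) : Set V := {w | ∀ a ∈ Λ, Γ.Adj w a}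

/-- A subgroup decomposes non-trivially as a direct product. -/
def IsNontrivDirectProduct (H : Subgroup (GraphProduct Γ G)) : Prop :=
  ∃ (A B : Type) (_ : Group A) (_ : Group B),
    Nontrivial A ∧ Nontrivial B ∧ Nonempty (H ≃* A × B)

/-- `Γ` has a SIL: two distinct non-adjacent vertices `u`, `v` such that the graph induced on
the complement of `link(u) ∩ link(v)` has a connected component containing neither `u` nor
`v`. -/
def HasSIL : Prop :=
  ∃ u v : V, u ≠ v ∧ ¬ Γ.Adj u v ∧
    ∃ Λ : Set V, IsConnCompOf Γ {w | ¬ (Γ.Adj u w ∧ Γ.Adj v w)} Λ ∧ u ∉ Λ ∧ v ∉ Λ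

end Extra

/-!
Multiplying a letter into a reduced word (moving it right past the letters it commutes with and
merging it with the first letter at its own vertex) is compatible with shuffling commuting
neighbours and with the defining relations. So the graph product acts on reduced words up to
shuffling, and evaluating this action at the empty word shows that reduced words with the same
value are shuffles of each other.

The projection onto `G_v` kills `⟨Λ₂⟩` when `v ∉ Λ₂`, which gives `Λ₁ ⊆ Λ₂`. For the
decomposition, choose a shortest word `w` representing an element of the coset `g⟨Λ₂⟩`, so that
`w⁻¹ Ĝ_v w ⊆ ⟨Λ₂⟩` for every `v ∈ Λ₁`. By induction on the length, every letter of `w` is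
adjacent to `v`: a first letter adjacent to `v` can be removed; a first letter at `v` commutes,
by induction, with the rest of `w` and could be absorbed into `⟨Λ₂⟩`; and if there is neither,
then `w⁻¹ x w` is reduced as written for `1 ≠ x ∈ G_v`, so by uniqueness the letters of `w` lie
in `Λ₂` and minimality forces `w = 1`. Hence `w ∈ ⟨link(Λ₁)⟩` and `g ∈ w⟨Λ₂⟩`.
-/

open scoped Classical

theorem Subgroup.le_conj_smul_of_conj_smul_eq {M : Type*} [Group M] {K H : Subgroup M} {a b : M}
    (ha : MulAut.conj a • K = K) (h : K ≤ MulAut.conj (a * b) • H) :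
    K ≤ MulAut.conj b • H := by
  rw [map_mul, mul_smul] at h
  rwa [← Subgroup.pointwise_smul_le_pointwise_smul_iff (a := MulAut.conj a), ha]

namespace GraphProduct

variable {V : Type} (Γ : SimpleGraph V) {G : V → Type}

section Shuffle

variable (G) in
abbrev Letter : Type := (v : V) × G v

inductive ShuffleStep : List (Letter G) → List (Letter G) → Prop
  | swap (a b : List (Letter G)) (p q : Letter G) (h : Γ.Adj p.1 q.1) :
      ShuffleStep (a ++ p :: q :: b) (a ++ q :: p :: b)

def ShuffleEquiv (w w' : List (Letter G)) : Prop := Relation.EqvGen (ShuffleStep Γ) w w'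

namespace ShuffleEquiv

variable {Γ}

@[refl] theorem refl (w : List (Letter G)) : ShuffleEquiv Γ w w := Relation.EqvGen.refl w

@[symm] theorem symm {w w' : List (Letter G)} (h : ShuffleEquiv Γ w w') : ShuffleEquiv Γ w' w :=
  Relation.EqvGen.symm _ _ h

@[trans] theorem trans {w₁ w₂ w₃ : List (Letter G)} (h : ShuffleEquiv Γ w₁ w₂)
    (h' : ShuffleEquiv Γ w₂ w₃) : ShuffleEquiv Γ w₁ w₃ :=
  Relation.EqvGen.trans _ _ _ h h'

theorem of_step {w w' : List (Letter G)} (h : ShuffleStep Γ w w') : ShuffleEquiv Γ w w' :=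
  Relation.EqvGen.rel _ _ h

theorem swap {p q : Letter G} (h : Γ.Adj p.1 q.1) (t : List (Letter G)) :
    ShuffleEquiv Γ (p :: q :: t) (q :: p :: t) :=
  of_step (.swap [] t p q h)

theorem cons (c : Letter G) {w w' : List (Letter G)} (h : ShuffleEquiv Γ w w') :
    ShuffleEquiv Γ (c :: w) (c :: w') := by
  induction h with
  | rel _ _ h =>
    obtain ⟨a, b, p, q, hpq⟩ := h
    exact of_step (.swap (c :: a) b p q hpq)
  | refl => rfl
  | symm _ _ _ ih => exact ih.symm
  | trans _ _ _ _ _ ih₁ ih₂ => exact ih₁.trans ih₂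

theorem induction_on {r : List (Letter G) → List (Letter G) → Prop} (hr : Equivalence r)
    (step : ∀ {w w'}, ShuffleStep Γ w w' → r w w') {w w' : List (Letter G)}
    (h : ShuffleEquiv Γ w w') : r w w' := by
  induction h with
  | rel _ _ h => exact step h
  | refl => exact hr.refl _
  | symm _ _ _ ih => exact hr.symm ih
  | trans _ _ _ _ _ ih₁ ih₂ => exact hr.trans ih₁ ih₂

theorem perm {w w' : List (Letter G)} (h : ShuffleEquiv Γ w w') : w.Perm w' :=
  h.induction_on ⟨List.Perm.refl, List.Perm.symm, List.Perm.trans⟩ fun ⟨a, b, p, q, _⟩ =>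
    (List.Perm.swap q p b).append_left a

end ShuffleEquiv

def IsFirstLetter (y : Letter G) (w : List (Letter G)) : Prop :=
  ∃ a b, w = a ++ y :: b ∧ ∀ z ∈ a, Γ.Adj y.1 z.1

theorem isFirstLetter_cons_iff {y c : Letter G} {t : List (Letter G)} :
    IsFirstLetter Γ y (c :: t) ↔ y = c ∨ Γ.Adj y.1 c.1 ∧ IsFirstLetter Γ y t := by
  constructor
  · rintro ⟨_ | ⟨c', a⟩, b, he, hadj⟩
    · exact .inl (List.cons.inj he).1.symm
    · obtain ⟨rfl, rfl⟩ := List.cons.inj he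
      exact .inr ⟨hadj c List.mem_cons_self, a, b, rfl, fun z hz => hadj z (.tail _ hz)⟩
  · rintro (rfl | ⟨hyc, a, b, rfl, hadj⟩)
    · exact ⟨[], t, rfl, by simp⟩
    · exact ⟨c :: a, b, rfl, by simpa [hyc] using hadj⟩

theorem IsFirstLetter.exists_shuffleEquiv {y : Letter G} {w : List (Letter G)}
    (h : IsFirstLetter Γ y w) : ∃ t, ShuffleEquiv Γ w (y :: t) := by
  obtain ⟨a, b, rfl, hadj⟩ := h
  refine ⟨a ++ b, ?_⟩
  induction a with
  | nil => rfl
  | cons c a ih =>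
    exact (ShuffleEquiv.cons c (ih fun z hz => hadj z (.tail _ hz))).trans
      (.swap (hadj c List.mem_cons_self).symm _)

def NoFirstAt (v : V) : List (Letter G) → Prop
  | [] => True
  | y :: t => y.1 ≠ v ∧ (Γ.Adj v y.1 → NoFirstAt v t)

@[simp] theorem noFirstAt_nil (v : V) : NoFirstAt Γ v ([] : List (Letter G)) := trivial

@[simp] theorem noFirstAt_cons (v : V) (y : Letter G) (t : List (Letter G)) :
    NoFirstAt Γ v (y :: t) ↔ y.1 ≠ v ∧ (Γ.Adj v y.1 → NoFirstAt Γ v t) := Iff.rfl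

theorem noFirstAt_iff {v : V} {w : List (Letter G)} :
    NoFirstAt Γ v w ↔ ∀ y, IsFirstLetter Γ y w → y.1 ≠ v := by
  induction w with
  | nil => simp [IsFirstLetter]
  | cons c t ih =>
    simp only [noFirstAt_cons, isFirstLetter_cons_iff, ih]
    constructor
    · rintro ⟨hc, ht⟩ y (rfl | ⟨hyc, hy⟩) hyv
      · exact hc hyv
      · exact ht (hyv ▸ hyc) y hy hyv
    · intro h
      exact ⟨h c (.inl rfl), fun hvc y hy hyv => h y (.inr ⟨hyv ▸ hvc, hy⟩) hyv⟩

theorem noFirstAt_swap {v : V} {p q : Letter G} (hpq : Γ.Adj p.1 q.1) (a b : List (Letter G)) :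
    NoFirstAt Γ v (a ++ p :: q :: b) ↔ NoFirstAt Γ v (a ++ q :: p :: b) := by
  induction a with
  | nil =>
    simp only [List.nil_append, noFirstAt_cons]
    constructor
    · rintro ⟨hp, hrest⟩
      have hq : q.1 ≠ v := fun hqv => (hrest (hqv ▸ hpq.symm)).1 hqv
      exact ⟨hq, fun hvq => ⟨hp, fun hvp => (hrest hvp).2 hvq⟩⟩
    · rintro ⟨hq, hrest⟩
      have hp : p.1 ≠ v := fun hpv => (hrest (hpv ▸ hpq)).1 hpv
      exact ⟨hp, fun hvp => ⟨hq, fun hvq => (hrest hvq).2 hvp⟩⟩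
  | cons c a ih => simp only [List.cons_append, noFirstAt_cons, ih]

end Shuffle

variable [∀ v, Group (G v)]

theorem vertexSubgroup_le_spanSubgroup {Λ : Set V} {v : V} (hv : v ∈ Λ) :
    vertexSubgroup Γ G v ≤ spanSubgroup Γ G Λ :=
  le_iSup₂ (f := fun u (_ : u ∈ Λ) => vertexSubgroup Γ G u) v hv

variable (G) in
def lift {M : Type*} [Group M] (f : ∀ v, G v →* M)
    (hf : ∀ u v, Γ.Adj u v → ∀ a b, Commute (f u a) (f v b)) : GraphProduct Γ G →* M :=
  QuotientGroup.lift _ (Monoid.CoprodI.lift f) <| Subgroup.normalClosure_le_normal <| by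
    rintro _ ⟨u, v, a, b, huv, rfl⟩
    simp [(hf u v huv a b).eq]

theorem lift_of {M : Type*} [Group M] (f : ∀ v, G v →* M)
    (hf : ∀ u v, Γ.Adj u v → ∀ a b, Commute (f u a) (f v b)) (v : V) (a : G v) :
    lift Γ G f hf (of Γ G v a) = f v a :=
  Monoid.CoprodI.lift_of f a

theorem commute_of_adj {u v : V} (h : Γ.Adj u v) (a : G u) (b : G v) :
    Commute (of Γ G u a) (of Γ G v b) := by
  have : Monoid.CoprodI.of a * Monoid.CoprodI.of b * (Monoid.CoprodI.of a)⁻¹ *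
      (Monoid.CoprodI.of b)⁻¹ ∈ Subgroup.normalClosure (graphProductRels Γ G) :=
    Subgroup.subset_normalClosure ⟨u, v, a, b, h, rfl⟩
  rw [← QuotientGroup.eq_one_iff] at this
  simpa [← commutatorElement_eq_one_iff_commute, commutatorElement_def, GraphProduct.of]
    using this

section WordProd

def wordProd (w : List (Letter G)) : GraphProduct Γ G :=
  (w.map fun l => of Γ G l.1 l.2).prod

@[simp] theorem wordProd_nil : wordProd Γ ([] : List (Letter G)) = 1 := rfl

@[simp] theorem wordProd_cons (x : Letter G) (w : List (Letter G)) :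
    wordProd Γ (x :: w) = of Γ G x.1 x.2 * wordProd Γ w := by
  simp [wordProd]

@[simp] theorem wordProd_append (w₁ w₂ : List (Letter G)) :
    wordProd Γ (w₁ ++ w₂) = wordProd Γ w₁ * wordProd Γ w₂ := by
  simp [wordProd]

theorem wordProd_mem_spanSubgroup {Λ : Set V} {w : List (Letter G)}
    (hw : ∀ l ∈ w, l.1 ∈ Λ) : wordProd Γ w ∈ spanSubgroup Γ G Λ :=
  Subgroup.list_prod_mem _ <| by
    simp only [List.mem_map]
    rintro _ ⟨l, hl, rfl⟩
    exact vertexSubgroup_le_spanSubgroup Γ (hw l hl) ⟨l.2, rfl⟩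

theorem commute_wordProd {v : V} {w : List (Letter G)} (hw : ∀ l ∈ w, Γ.Adj l.1 v) (a : G v) :
    Commute (of Γ G v a) (wordProd Γ w) :=
  Commute.list_prod_right _ _ <| by
    simp only [List.mem_map]
    rintro _ ⟨l, hl, rfl⟩
    exact (commute_of_adj Γ (hw l hl) l.2 a).symm

theorem ShuffleEquiv.wordProd_eq {w w' : List (Letter G)} (h : ShuffleEquiv Γ w w') :
    wordProd Γ w = wordProd Γ w' :=
  h.induction_on (r := fun w w' => wordProd Γ w = wordProd Γ w')
    ⟨fun _ => rfl, Eq.symm, Eq.trans⟩ fun ⟨a, b, p, q, hpq⟩ => by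
      simp only [wordProd_append, wordProd_cons, ← mul_assoc, (commute_of_adj Γ hpq p.2 q.2).eq]

end WordProd

section Reduced

def Reduced : List (Letter G) → Prop
  | [] => True
  | y :: t => y.2 ≠ 1 ∧ NoFirstAt Γ y.1 t ∧ Reduced t

@[simp] theorem reduced_cons (y : Letter G) (t : List (Letter G)) :
    Reduced Γ (y :: t) ↔ y.2 ≠ 1 ∧ NoFirstAt Γ y.1 t ∧ Reduced Γ t := Iff.rfl

theorem ShuffleStep.reduced_iff {w w' : List (Letter G)} (h : ShuffleStep Γ w w') :
    Reduced Γ w ↔ Reduced Γ w' := by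
  obtain ⟨a, b, p, q, hpq⟩ := h
  induction a with
  | nil =>
    simp only [List.nil_append, reduced_cons, noFirstAt_cons]
    constructor
    · rintro ⟨hp1, ⟨hqp, hnfp⟩, hq1, hnfq, hred⟩
      exact ⟨hq1, ⟨fun e => hqp e.symm, fun _ => hnfq⟩, hp1, hnfp hpq, hred⟩
    · rintro ⟨hq1, ⟨hpq', hnfq⟩, hp1, hnfp, hred⟩
      exact ⟨hp1, ⟨fun e => hpq' e.symm, fun _ => hnfp⟩, hq1, hnfq hpq.symm, hred⟩
  | cons c a ih => simp only [List.cons_append, reduced_cons, ih, noFirstAt_swap Γ hpq]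

theorem ShuffleEquiv.reduced_iff {w w' : List (Letter G)} (h : ShuffleEquiv Γ w w') :
    Reduced Γ w ↔ Reduced Γ w' :=
  h.induction_on (r := fun w w' => Reduced Γ w ↔ Reduced Γ w')
    ⟨fun _ => .rfl, Iff.symm, Iff.trans⟩ (ShuffleStep.reduced_iff Γ)

end Reduced

section MulLetter

noncomputable def mulLetter (x : Letter G) : List (Letter G) → List (Letter G)
  | [] => if x.2 = 1 then [] else [x]
  | y :: t =>
    if h : y.1 = x.1 then
      (if x.2 * (h ▸ y.2) = 1 then t else ⟨x.1, x.2 * (h ▸ y.2)⟩ :: t)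
    else if Γ.Adj x.1 y.1 then y :: mulLetter x t
    else if x.2 = 1 then y :: t else x :: y :: t

variable {Γ}

theorem mulLetter_nil_of_eq_one {u : V} {g : G u} (h : g = 1) :
    mulLetter Γ ⟨u, g⟩ [] = [] :=
  if_pos h

theorem mulLetter_nil_of_ne_one {u : V} {g : G u} (h : g ≠ 1) :
    mulLetter Γ ⟨u, g⟩ [] = [⟨u, g⟩] :=
  if_neg h

theorem mulLetter_cons_same (u : V) (g c : G u) (t : List (Letter G)) :
    mulLetter Γ ⟨u, g⟩ (⟨u, c⟩ :: t) = if g * c = 1 then t else ⟨u, g * c⟩ :: t :=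
  dif_pos rfl

theorem mulLetter_cons_of_adj {x y : Letter G} (t : List (Letter G)) (hne : y.1 ≠ x.1)
    (hA : Γ.Adj x.1 y.1) : mulLetter Γ x (y :: t) = y :: mulLetter Γ x t := by
  rw [mulLetter, dif_neg hne, if_pos hA]

theorem mulLetter_cons_of_not_adj {x y : Letter G} (t : List (Letter G)) (hne : y.1 ≠ x.1)
    (hA : ¬ Γ.Adj x.1 y.1) (hx : x.2 ≠ 1) : mulLetter Γ x (y :: t) = x :: y :: t := by
  rw [mulLetter, dif_neg hne, if_neg hA, if_neg hx]

theorem mulLetter_cons_of_not_adj_of_eq_one {x y : Letter G} (t : List (Letter G))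
    (hne : y.1 ≠ x.1) (hA : ¬ Γ.Adj x.1 y.1) (hx : x.2 = 1) :
    mulLetter Γ x (y :: t) = y :: t := by
  rw [mulLetter, dif_neg hne, if_neg hA, if_pos hx]

theorem noFirstAt_mulLetter {u : V} {x : Letter G} (hadj : Γ.Adj u x.1) {w : List (Letter G)}
    (h : NoFirstAt Γ u w) : NoFirstAt Γ u (mulLetter Γ x w) := by
  obtain ⟨xv, g⟩ := x
  induction w with
  | nil =>
    by_cases hg : g = 1
    · rw [mulLetter_nil_of_eq_one hg]; trivial
    · rw [mulLetter_nil_of_ne_one hg]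
      exact ⟨hadj.ne.symm, fun _ => trivial⟩
  | cons y t ih =>
    obtain ⟨yv, c⟩ := y
    obtain ⟨hy1, hy2⟩ := h
    by_cases hyx : yv = xv
    · subst hyx
      rw [mulLetter_cons_same]
      split
      · exact hy2 hadj
      · exact ⟨hadj.ne.symm, fun _ => hy2 hadj⟩
    by_cases hA : Γ.Adj xv yv
    · rw [mulLetter_cons_of_adj t hyx hA]
      exact ⟨hy1, fun hu => ih (hy2 hu)⟩
    by_cases hg : g = 1
    · rw [mulLetter_cons_of_not_adj_of_eq_one t hyx hA hg]; exact ⟨hy1, hy2⟩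
    · rw [mulLetter_cons_of_not_adj t hyx hA hg]
      exact ⟨hadj.ne.symm, fun _ => ⟨hy1, hy2⟩⟩

theorem reduced_mulLetter (x : Letter G) {w : List (Letter G)} (h : Reduced Γ w) :
    Reduced Γ (mulLetter Γ x w) := by
  obtain ⟨xv, g⟩ := x
  induction w with
  | nil =>
    by_cases hg : g = 1
    · rw [mulLetter_nil_of_eq_one hg]; trivial
    · rw [mulLetter_nil_of_ne_one hg]; exact ⟨hg, trivial, trivial⟩
  | cons y t ih =>
    obtain ⟨yv, c⟩ := y
    obtain ⟨hy1, hnf, hred⟩ := h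
    by_cases hyx : yv = xv
    · subst hyx
      rw [mulLetter_cons_same]
      split
      · exact hred
      · exact ⟨by assumption, hnf, hred⟩
    by_cases hA : Γ.Adj xv yv
    · rw [mulLetter_cons_of_adj t hyx hA]
      exact ⟨hy1, noFirstAt_mulLetter hA.symm hnf, ih hred⟩
    by_cases hg : g = 1
    · rw [mulLetter_cons_of_not_adj_of_eq_one t hyx hA hg]; exact ⟨hy1, hnf, hred⟩
    · rw [mulLetter_cons_of_not_adj t hyx hA hg]
      exact ⟨hg, ⟨hyx, fun ha => absurd ha hA⟩, hy1, hnf, hred⟩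

theorem wordProd_mulLetter (x : Letter G) (w : List (Letter G)) :
    wordProd Γ (mulLetter Γ x w) = of Γ G x.1 x.2 * wordProd Γ w := by
  obtain ⟨xv, g⟩ := x
  induction w with
  | nil =>
    by_cases hg : g = 1
    · rw [mulLetter_nil_of_eq_one hg]; simp [hg]
    · rw [mulLetter_nil_of_ne_one hg]; simp
  | cons y t ih =>
    obtain ⟨yv, c⟩ := y
    by_cases hyx : yv = xv
    · subst hyx
      rw [mulLetter_cons_same]
      split <;> simp_all [← mul_assoc, ← map_mul]
    by_cases hA : Γ.Adj xv yv
    · rw [mulLetter_cons_of_adj t hyx hA, wordProd_cons, ih, wordProd_cons, ← mul_assoc,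
        ← mul_assoc, (commute_of_adj Γ hA g c).eq]
    by_cases hg : g = 1
    · rw [mulLetter_cons_of_not_adj_of_eq_one t hyx hA hg]; simp [hg]
    · rw [mulLetter_cons_of_not_adj t hyx hA hg, wordProd_cons]

theorem mem_mulLetter {x l : Letter G} {w : List (Letter G)} (hl : l ∈ mulLetter Γ x w) :
    l.1 = x.1 ∨ l ∈ w := by
  obtain ⟨xv, g⟩ := x
  induction w with
  | nil =>
    by_cases hg : g = 1
    · simp [mulLetter_nil_of_eq_one hg] at hl
    · simp_all [mulLetter_nil_of_ne_one hg]
  | cons y t ih =>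
    obtain ⟨yv, c⟩ := y
    by_cases hyx : yv = xv
    · subst hyx
      rw [mulLetter_cons_same] at hl
      split at hl <;> aesop
    by_cases hA : Γ.Adj xv yv
    · rw [mulLetter_cons_of_adj t hyx hA] at hl
      rcases List.mem_cons.mp hl with rfl | hl
      · exact .inr List.mem_cons_self
      · exact (ih hl).imp_right (List.mem_cons_of_mem _)
    by_cases hg : g = 1
    · rw [mulLetter_cons_of_not_adj_of_eq_one t hyx hA hg] at hl; exact .inr hl
    · rw [mulLetter_cons_of_not_adj t hyx hA hg] at hl
      rcases List.mem_cons.mp hl with rfl | hl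
      · exact .inl rfl
      · exact .inr hl

theorem length_mulLetter_le (x : Letter G) (w : List (Letter G)) :
    (mulLetter Γ x w).length ≤ w.length + 1 := by
  obtain ⟨xv, g⟩ := x
  induction w with
  | nil =>
    by_cases hg : g = 1
    · simp [mulLetter_nil_of_eq_one hg]
    · simp [mulLetter_nil_of_ne_one hg]
  | cons y t ih =>
    obtain ⟨yv, c⟩ := y
    by_cases hyx : yv = xv
    · subst hyx
      rw [mulLetter_cons_same]
      split <;> simp +arith
    by_cases hA : Γ.Adj xv yv
    · rw [mulLetter_cons_of_adj t hyx hA]; simpa using ih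
    by_cases hg : g = 1
    · rw [mulLetter_cons_of_not_adj_of_eq_one t hyx hA hg]; simp
    · rw [mulLetter_cons_of_not_adj t hyx hA hg]; simp

theorem mulLetter_shuffleEquiv_cons {x : Letter G} (hx : x.2 ≠ 1) {w : List (Letter G)}
    (hnf : NoFirstAt Γ x.1 w) (hred : Reduced Γ w) :
    ShuffleEquiv Γ (mulLetter Γ x w) (x :: w) := by
  induction w with
  | nil => rw [mulLetter_nil_of_ne_one hx]
  | cons y t ih =>
    obtain ⟨hy1, himp⟩ := hnf
    by_cases hA : Γ.Adj x.1 y.1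
    · rw [mulLetter_cons_of_adj t hy1 hA]
      exact (ShuffleEquiv.cons y (ih (himp hA) hred.2.2)).trans (.swap hA.symm t)
    · rw [mulLetter_cons_of_not_adj t hy1 hA hx]

theorem mulLetter_one (v : V) {w : List (Letter G)} (hred : Reduced Γ w) :
    mulLetter Γ ⟨v, 1⟩ w = w := by
  induction w with
  | nil => exact mulLetter_nil_of_eq_one rfl
  | cons y t ih =>
    obtain ⟨yv, c⟩ := y
    obtain ⟨hyn, -, hredt⟩ := hred
    by_cases hyv : yv = v
    · subst hyv
      rw [mulLetter_cons_same, one_mul, if_neg hyn]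
    by_cases hA : Γ.Adj v yv
    · rw [mulLetter_cons_of_adj t hyv hA, ih hredt]
    · exact mulLetter_cons_of_not_adj_of_eq_one t hyv hA rfl

theorem mulLetter_mulLetter_same (v : V) (a b : G v) {w : List (Letter G)}
    (hred : Reduced Γ w) :
    ShuffleEquiv Γ (mulLetter Γ ⟨v, a⟩ (mulLetter Γ ⟨v, b⟩ w))
      (mulLetter Γ ⟨v, a * b⟩ w) := by
  by_cases hb : b = 1
  · rw [hb, mulLetter_one v hred, mul_one]
  induction w with
  | nil =>
    rw [mulLetter_nil_of_ne_one hb, mulLetter_cons_same]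
    by_cases hab : a * b = 1
    · rw [if_pos hab, mulLetter_nil_of_eq_one hab]
    · rw [if_neg hab, mulLetter_nil_of_ne_one hab]
  | cons y t ih =>
    obtain ⟨yv, c⟩ := y
    have ⟨_, hynf, hredt⟩ := hred
    by_cases hyv : yv = v
    · subst hyv
      rw [mulLetter_cons_same, mulLetter_cons_same]
      by_cases hbc : b * c = 1
      · have habc : a * b * c = a := by rw [mul_assoc, hbc, mul_one]
        rw [if_pos hbc, habc]
        by_cases ha : a = 1
        · rw [if_pos ha, ha, mulLetter_one yv hredt]
        · rw [if_neg ha]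
          exact mulLetter_shuffleEquiv_cons ha hynf hredt
      · rw [if_neg hbc, mulLetter_cons_same, mul_assoc]
    by_cases hA : Γ.Adj v yv
    · rw [mulLetter_cons_of_adj t hyv hA, mulLetter_cons_of_adj _ hyv hA,
        mulLetter_cons_of_adj t hyv hA]
      exact .cons _ (ih hredt)
    · rw [mulLetter_cons_of_not_adj t hyv hA hb, mulLetter_cons_same]
      by_cases hab : a * b = 1
      · rw [if_pos hab, hab, mulLetter_one v hred]
      · rw [if_neg hab, mulLetter_cons_of_not_adj t hyv hA hab]

theorem mulLetter_mulLetter_comm_cons_same {u v : V} (hA : Γ.Adj u v) (a c : G u) (b : G v)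
    (t : List (Letter G)) :
    ShuffleEquiv Γ (mulLetter Γ ⟨u, a⟩ (mulLetter Γ ⟨v, b⟩ (⟨u, c⟩ :: t)))
      (mulLetter Γ ⟨v, b⟩ (mulLetter Γ ⟨u, a⟩ (⟨u, c⟩ :: t))) := by
  rw [mulLetter_cons_of_adj t hA.ne hA.symm, mulLetter_cons_same, mulLetter_cons_same]
  split
  · rfl
  · rw [mulLetter_cons_of_adj t hA.ne hA.symm]

theorem mulLetter_mulLetter_comm_cons_of_adj_of_not_adj {u v : V} (hA : Γ.Adj u v) (a : G u)
    {b : G v} (hb : b ≠ 1) {y : Letter G} (hyu : y.1 ≠ u) (hyv : y.1 ≠ v) (hAu : Γ.Adj u y.1)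
    (hAv : ¬ Γ.Adj v y.1) (t : List (Letter G)) :
    ShuffleEquiv Γ (mulLetter Γ ⟨u, a⟩ (mulLetter Γ ⟨v, b⟩ (y :: t)))
      (mulLetter Γ ⟨v, b⟩ (mulLetter Γ ⟨u, a⟩ (y :: t))) := by
  rw [mulLetter_cons_of_not_adj t hyv hAv hb, mulLetter_cons_of_adj t hyu hAu,
    mulLetter_cons_of_adj (y :: t) hA.ne.symm hA, mulLetter_cons_of_adj t hyu hAu,
    mulLetter_cons_of_not_adj _ hyv hAv hb]

theorem mulLetter_mulLetter_comm {u v : V} (hA : Γ.Adj u v) (a : G u) (b : G v)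
    {w : List (Letter G)} (hred : Reduced Γ w) :
    ShuffleEquiv Γ (mulLetter Γ ⟨u, a⟩ (mulLetter Γ ⟨v, b⟩ w))
      (mulLetter Γ ⟨v, b⟩ (mulLetter Γ ⟨u, a⟩ w)) := by
  by_cases ha : a = 1
  · rw [ha, mulLetter_one u (reduced_mulLetter _ hred), mulLetter_one u hred]
  by_cases hb : b = 1
  · rw [hb, mulLetter_one v hred, mulLetter_one v (reduced_mulLetter _ hred)]
  induction w with
  | nil =>
    rw [mulLetter_nil_of_ne_one hb, mulLetter_nil_of_ne_one ha,
      mulLetter_cons_of_adj [] hA.ne.symm hA, mulLetter_cons_of_adj [] hA.ne hA.symm,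
      mulLetter_nil_of_ne_one ha, mulLetter_nil_of_ne_one hb]
    exact .swap hA.symm []
  | cons y t ih =>
    obtain ⟨yv, c⟩ := y
    by_cases hyu : yv = u
    · subst hyu
      exact mulLetter_mulLetter_comm_cons_same hA a c b t
    by_cases hyv : yv = v
    · subst hyv
      exact (mulLetter_mulLetter_comm_cons_same hA.symm b c a t).symm
    by_cases hAu : Γ.Adj u yv <;> by_cases hAv : Γ.Adj v yv
    · rw [mulLetter_cons_of_adj t hyv hAv, mulLetter_cons_of_adj _ hyu hAu,
        mulLetter_cons_of_adj t hyu hAu, mulLetter_cons_of_adj _ hyv hAv]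
      exact .cons _ (ih hred.2.2)
    · exact mulLetter_mulLetter_comm_cons_of_adj_of_not_adj hA a hb hyu hyv hAu hAv t
    · exact (mulLetter_mulLetter_comm_cons_of_adj_of_not_adj hA.symm b ha hyv hyu hAv hAu t).symm
    · rw [mulLetter_cons_of_not_adj t hyv hAv hb, mulLetter_cons_of_not_adj t hyu hAu ha,
        mulLetter_cons_of_adj (⟨yv, c⟩ :: t) hA.ne.symm hA,
        mulLetter_cons_of_adj (⟨yv, c⟩ :: t) hA.ne hA.symm,
        mulLetter_cons_of_not_adj t hyu hAu ha, mulLetter_cons_of_not_adj t hyv hAv hb]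
      exact .swap hA.symm _

theorem mulLetter_swap_of_eq {x p q : Letter G} (hpq : Γ.Adj p.1 q.1) (hp : p.1 = x.1)
    (b : List (Letter G)) :
    ShuffleEquiv Γ (mulLetter Γ x (p :: q :: b)) (mulLetter Γ x (q :: p :: b)) := by
  obtain ⟨u, g⟩ := x
  obtain ⟨pv, c⟩ := p
  obtain rfl : pv = u := hp
  rw [mulLetter_cons_of_adj (x := ⟨_, g⟩) _ hpq.ne.symm hpq, mulLetter_cons_same,
    mulLetter_cons_same]
  split
  · rfl
  · exact .swap (p := ⟨_, g * c⟩) hpq b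

theorem mulLetter_swap_of_adj_of_not_adj {x p q : Letter G} (hpq : Γ.Adj p.1 q.1)
    (hp : p.1 ≠ x.1) (hq : q.1 ≠ x.1) (hAp : Γ.Adj x.1 p.1) (hAq : ¬ Γ.Adj x.1 q.1)
    (b : List (Letter G)) :
    ShuffleEquiv Γ (mulLetter Γ x (p :: q :: b)) (mulLetter Γ x (q :: p :: b)) := by
  rw [mulLetter_cons_of_adj _ hp hAp]
  by_cases hx : x.2 = 1
  · rw [mulLetter_cons_of_not_adj_of_eq_one b hq hAq hx,
      mulLetter_cons_of_not_adj_of_eq_one _ hq hAq hx]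
    exact .swap hpq b
  · rw [mulLetter_cons_of_not_adj b hq hAq hx, mulLetter_cons_of_not_adj _ hq hAq hx]
    exact (ShuffleEquiv.swap hAp.symm _).trans (.cons x (.swap hpq b))

theorem mulLetter_swap {x p q : Letter G} (hpq : Γ.Adj p.1 q.1) (b : List (Letter G)) :
    ShuffleEquiv Γ (mulLetter Γ x (p :: q :: b)) (mulLetter Γ x (q :: p :: b)) := by
  by_cases hp : p.1 = x.1
  · exact mulLetter_swap_of_eq hpq hp b
  by_cases hq : q.1 = x.1
  · exact (mulLetter_swap_of_eq hpq.symm hq b).symm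
  by_cases hAp : Γ.Adj x.1 p.1 <;> by_cases hAq : Γ.Adj x.1 q.1
  · rw [mulLetter_cons_of_adj (q :: b) hp hAp, mulLetter_cons_of_adj b hq hAq,
      mulLetter_cons_of_adj (p :: b) hq hAq, mulLetter_cons_of_adj b hp hAp]
    exact .swap hpq _
  · exact mulLetter_swap_of_adj_of_not_adj hpq hp hq hAp hAq b
  · exact (mulLetter_swap_of_adj_of_not_adj hpq.symm hq hp hAq hAp b).symm
  by_cases hx : x.2 = 1
  · rw [mulLetter_cons_of_not_adj_of_eq_one _ hp hAp hx,
      mulLetter_cons_of_not_adj_of_eq_one _ hq hAq hx]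
    exact .swap hpq b
  · rw [mulLetter_cons_of_not_adj _ hp hAp hx, mulLetter_cons_of_not_adj _ hq hAq hx]
    exact .cons x (.swap hpq b)

theorem ShuffleStep.mulLetter (x : Letter G) {w w' : List (Letter G)} (h : ShuffleStep Γ w w') :
    ShuffleEquiv Γ (GraphProduct.mulLetter Γ x w) (GraphProduct.mulLetter Γ x w') := by
  obtain ⟨a, b, p, q, hpq⟩ := h
  induction a with
  | nil => exact mulLetter_swap hpq b
  | cons c a ih =>
    have hstep : ShuffleEquiv Γ (a ++ p :: q :: b) (a ++ q :: p :: b) :=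
      .of_step (.swap a b p q hpq)
    obtain ⟨u, g⟩ := x
    obtain ⟨cv, c⟩ := c
    simp only [List.cons_append]
    by_cases hc : cv = u
    · subst hc
      rw [mulLetter_cons_same, mulLetter_cons_same]
      split
      · exact hstep
      · exact .cons _ hstep
    by_cases hA : Γ.Adj u cv
    · rw [mulLetter_cons_of_adj _ hc hA, mulLetter_cons_of_adj _ hc hA]
      exact .cons _ ih
    by_cases hg : g = 1
    · rw [mulLetter_cons_of_not_adj_of_eq_one _ hc hA hg,
        mulLetter_cons_of_not_adj_of_eq_one _ hc hA hg]
      exact .cons _ hstep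
    · rw [mulLetter_cons_of_not_adj _ hc hA hg, mulLetter_cons_of_not_adj _ hc hA hg]
      exact .cons _ (.cons _ hstep)

theorem ShuffleEquiv.mulLetter (x : Letter G) {w w' : List (Letter G)}
    (h : ShuffleEquiv Γ w w') :
    ShuffleEquiv Γ (GraphProduct.mulLetter Γ x w) (GraphProduct.mulLetter Γ x w') :=
  h.induction_on (r := fun w w' =>
      ShuffleEquiv Γ (GraphProduct.mulLetter Γ x w) (GraphProduct.mulLetter Γ x w'))
    ⟨fun _ => .refl _, .symm, .trans⟩ (ShuffleStep.mulLetter x)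

end MulLetter

section NormalForm

variable (G) in
def shuffleSetoid : Setoid {w : List (Letter G) // Reduced Γ w} :=
  ⟨fun w w' => ShuffleEquiv Γ w.1 w'.1, ⟨fun _ => .refl _, .symm, .trans⟩⟩

variable (G) in
abbrev NormalForm : Type := Quotient (shuffleSetoid Γ G)

noncomputable def NormalForm.mulLetter (x : Letter G) : NormalForm Γ G → NormalForm Γ G :=
  Quotient.map (fun w => ⟨GraphProduct.mulLetter Γ x w.1, reduced_mulLetter x w.2⟩)
    fun _ _ h => ShuffleEquiv.mulLetter x h

@[reducible] noncomputable def vertexAction (v : V) : MulAction (G v) (NormalForm Γ G) where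
  smul a := NormalForm.mulLetter Γ ⟨v, a⟩
  one_smul := Quotient.ind fun w => Quotient.sound <| by
    change ShuffleEquiv Γ (mulLetter Γ ⟨v, 1⟩ w.1) w.1
    rw [mulLetter_one v w.2]
  mul_smul a b := Quotient.ind fun w => Quotient.sound (mulLetter_mulLetter_same v a b w.2).symm

variable (G) in
noncomputable def toPerm : GraphProduct Γ G →* Equiv.Perm (NormalForm Γ G) :=
  lift Γ G (fun v => @MulAction.toPermHom _ _ _ (vertexAction Γ v)) fun _ _ h a b =>
    show Commute _ _ from
      Equiv.ext <| Quotient.ind fun w => Quotient.sound (mulLetter_mulLetter_comm h a b w.2)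

theorem toPerm_of_apply (x : Letter G) (w : List (Letter G)) (hw : Reduced Γ w) :
    toPerm Γ G (of Γ G x.1 x.2) ⟦⟨w, hw⟩⟧ =
      ⟦⟨mulLetter Γ x w, reduced_mulLetter x hw⟩⟧ := by
  rw [toPerm, lift_of]
  rfl

theorem toPerm_wordProd {w : List (Letter G)} (hw : Reduced Γ w) :
    toPerm Γ G (wordProd Γ w) ⟦⟨[], trivial⟩⟧ = ⟦⟨w, hw⟩⟧ := by
  induction w with
  | nil => rfl
  | cons x t ih =>
    rw [wordProd_cons, map_mul, Equiv.Perm.mul_apply, ih hw.2.2, toPerm_of_apply]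
    exact Quotient.sound (mulLetter_shuffleEquiv_cons hw.1 hw.2.1 hw.2.2)

theorem shuffleEquiv_of_wordProd_eq {w w' : List (Letter G)} (hw : Reduced Γ w)
    (hw' : Reduced Γ w') (h : wordProd Γ w = wordProd Γ w') : ShuffleEquiv Γ w w' := by
  have := toPerm_wordProd Γ hw
  rw [h, toPerm_wordProd Γ hw'] at this
  exact (Quotient.exact this).symm

end NormalForm

section Reduce

noncomputable def reduce (w : List (Letter G)) : List (Letter G) := w.foldr (mulLetter Γ) []

theorem reduced_reduce (w : List (Letter G)) : Reduced Γ (reduce Γ w) := by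
  induction w with
  | nil => trivial
  | cons x t ih => exact reduced_mulLetter x ih

@[simp] theorem wordProd_reduce (w : List (Letter G)) :
    wordProd Γ (reduce Γ w) = wordProd Γ w := by
  induction w with
  | nil => rfl
  | cons x t ih => rw [reduce, List.foldr_cons, wordProd_mulLetter, ← reduce, ih, wordProd_cons]

theorem length_reduce_le (w : List (Letter G)) : (reduce Γ w).length ≤ w.length := by
  induction w with
  | nil => rfl
  | cons x t ih => exact (length_mulLetter_le x _).trans (Nat.succ_le_succ ih)

theorem exists_mem_of_mem_reduce {w : List (Letter G)} {l : Letter G} (hl : l ∈ reduce Γ w) :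
    ∃ l' ∈ w, l'.1 = l.1 := by
  induction w with
  | nil => simp [reduce] at hl
  | cons x t ih =>
    rcases mem_mulLetter hl with h | h
    · exact ⟨x, List.mem_cons_self, h.symm⟩
    · obtain ⟨l', hl', he⟩ := ih h
      exact ⟨l', .tail _ hl', he⟩

end Reduce

def invRev (w : List (Letter G)) : List (Letter G) := (w.map fun l => ⟨l.1, l.2⁻¹⟩).reverse

@[simp] theorem wordProd_invRev (w : List (Letter G)) :
    wordProd Γ (invRev w) = (wordProd Γ w)⁻¹ := by
  induction w with
  | nil => rfl
  | cons y t ih => simp_all [invRev]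

theorem exists_wordProd_eq (g : GraphProduct Γ G) : ∃ w, wordProd Γ w = g := by
  obtain ⟨y, rfl⟩ := QuotientGroup.mk'_surjective _ g
  induction y using Monoid.CoprodI.induction_on with
  | one => exact ⟨[], (map_one _).symm⟩
  | of v a => exact ⟨[⟨v, a⟩], by simp [GraphProduct.of]⟩
  | mul a b ha hb =>
    obtain ⟨w₁, h₁⟩ := ha
    obtain ⟨w₂, h₂⟩ := hb
    exact ⟨w₁ ++ w₂, by simp [h₁, h₂]⟩

theorem exists_reduced_of_mem_spanSubgroup {Λ : Set V} {g : GraphProduct Γ G}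
    (hg : g ∈ spanSubgroup Γ G Λ) :
    ∃ w, Reduced Γ w ∧ wordProd Γ w = g ∧ ∀ l ∈ w, l.1 ∈ Λ := by
  let words : Subgroup (GraphProduct Γ G) :=
    { carrier := {g | ∃ w : List (Letter G), (∀ l ∈ w, l.1 ∈ Λ) ∧ wordProd Γ w = g}
      mul_mem' := by
        rintro _ _ ⟨w₁, h₁, rfl⟩ ⟨w₂, h₂, rfl⟩
        exact ⟨w₁ ++ w₂, by simp_all [or_imp], wordProd_append Γ w₁ w₂⟩
      one_mem' := ⟨[], by simp, rfl⟩
      inv_mem' := by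
        rintro _ ⟨w, hw, rfl⟩
        refine ⟨invRev w, fun l hl => ?_, wordProd_invRev Γ w⟩
        obtain ⟨l', hl', rfl⟩ := List.mem_map.mp (List.mem_reverse.mp hl)
        exact hw l' hl' }
  have hle : spanSubgroup Γ G Λ ≤ words := iSup₂_le fun v hv => by
    rintro _ ⟨a, rfl⟩
    exact ⟨[⟨v, a⟩], by simpa using hv, by simp⟩
  obtain ⟨w, hw, rfl⟩ := hle hg
  refine ⟨reduce Γ w, reduced_reduce Γ w, wordProd_reduce Γ w, fun l hl => ?_⟩
  obtain ⟨l', hl', he⟩ := exists_mem_of_mem_reduce Γ hl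
  exact he ▸ hw l' hl'

theorem reduced_invRev_append {u s : List (Letter G)} (hu : Reduced Γ u) (hs : Reduced Γ s)
    (h : ∀ y, IsFirstLetter Γ y u → NoFirstAt Γ y.1 s) : Reduced Γ (invRev u ++ s) := by
  induction u generalizing s with
  | nil => simpa [invRev] using hs
  | cons y t ih =>
    obtain ⟨hy, hyt, ht⟩ := hu
    have hs' : Reduced Γ (⟨y.1, y.2⁻¹⟩ :: s) :=
      ⟨inv_ne_one.mpr hy, h y (isFirstLetter_cons_iff Γ |>.mpr (.inl rfl)), hs⟩
    have hfirst (z : Letter G) (hz : IsFirstLetter Γ z t) :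
        NoFirstAt Γ z.1 (⟨y.1, y.2⁻¹⟩ :: s) :=
      ⟨fun hzy => (noFirstAt_iff Γ).mp hyt z hz hzy.symm,
        fun hzy => h z ((isFirstLetter_cons_iff Γ).mpr (.inr ⟨hzy, hz⟩))⟩
    simpa [invRev] using ih ht hs' hfirst

section Projection

variable (G) in
noncomputable def toPi : GraphProduct Γ G →* ∀ v, G v :=
  lift Γ G (MonoidHom.mulSingle G) fun _ _ h => Pi.mulSingle_commute h.ne

theorem toPi_of (v : V) (a : G v) : toPi Γ G (of Γ G v a) = Pi.mulSingle v a :=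
  lift_of Γ _ _ v a

theorem spanSubgroup_le_ker_toPi_apply {Λ : Set V} {v : V} (hv : v ∉ Λ) :
    spanSubgroup Γ G Λ ≤ ((Pi.evalMonoidHom G v).comp (toPi Γ G)).ker :=
  iSup₂_le fun u hu => by
    rintro _ ⟨a, rfl⟩
    simp [toPi_of, Pi.mulSingle_eq_of_ne (ne_of_mem_of_not_mem hu hv).symm]

theorem subset_of_spanSubgroup_le_conj_smul [∀ v, Nontrivial (G v)] {Λ₁ Λ₂ : Set V}
    {g : GraphProduct Γ G}
    (h : spanSubgroup Γ G Λ₁ ≤ MulAut.conj g • spanSubgroup Γ G Λ₂) : Λ₁ ⊆ Λ₂ := by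
  intro v hv
  by_contra hv₂
  obtain ⟨a, ha⟩ := exists_ne (1 : G v)
  let K := ((Pi.evalMonoidHom G v).comp (toPi Γ G)).ker
  have hK : MulAut.conj g • spanSubgroup Γ G Λ₂ ≤ K :=
    Subgroup.Normal.conj_smul_eq_self g K ▸
      Subgroup.pointwise_smul_le_pointwise_smul_iff.mpr (spanSubgroup_le_ker_toPi_apply Γ hv₂)
  have := hK (h (vertexSubgroup_le_spanSubgroup Γ hv ⟨a, rfl⟩))
  simp only [K, MonoidHom.mem_ker, MonoidHom.comp_apply, toPi_of, Pi.evalMonoidHom_apply,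
    Pi.mulSingle_eq_same] at this
  exact ha this

end Projection

theorem conj_smul_vertexSubgroup_of_adj {u v : V} (h : Γ.Adj u v) (a : G u) :
    MulAut.conj (of Γ G u a) • vertexSubgroup Γ G v = vertexSubgroup Γ G v := by
  change (of Γ G v).range.map (MulAut.conj (of Γ G u a)).toMonoidHom = (of Γ G v).range
  rw [MonoidHom.map_range]
  congr 1
  ext b
  simp [(commute_of_adj Γ h a b).eq]

section ShortestInCoset

variable {Γ}

def IsShortestInCoset (H : Subgroup (GraphProduct Γ G)) (w : List (Letter G)) : Prop :=
  ∀ u, ∀ q ∈ H, wordProd Γ u = wordProd Γ w * q → w.length ≤ u.length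

theorem exists_reduced_isShortestInCoset (g : GraphProduct Γ G)
    (H : Subgroup (GraphProduct Γ G)) :
    ∃ w, ∃ q ∈ H, wordProd Γ w = g * q ∧ Reduced Γ w ∧ IsShortestInCoset H w := by
  have hex : ∃ n, ∃ u, ∃ q ∈ H, wordProd Γ u = g * q ∧ u.length = n := by
    obtain ⟨u, hu⟩ := exists_wordProd_eq Γ g
    exact ⟨_, u, 1, H.one_mem, by rw [hu, mul_one], rfl⟩
  obtain ⟨u, q, hq, hu, hlen⟩ := Nat.find_spec hex
  refine ⟨reduce Γ u, q, hq, (wordProd_reduce Γ u).trans hu, reduced_reduce Γ u, ?_⟩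
  intro u' q' hq' hu'
  have : Nat.find hex ≤ u'.length := Nat.find_min' hex
    ⟨u', q * q', H.mul_mem hq hq', by rw [hu', wordProd_reduce, hu, mul_assoc], rfl⟩
  have := length_reduce_le Γ u
  omega

theorem IsShortestInCoset.of_shuffleEquiv_cons {H : Subgroup (GraphProduct Γ G)}
    {w t : List (Letter G)} {y : Letter G} (hw : IsShortestInCoset H w)
    (h : ShuffleEquiv Γ w (y :: t)) : IsShortestInCoset H t := by
  intro u q hq hu
  have := hw (y :: u) q hq (by rw [h.wordProd_eq, wordProd_cons, wordProd_cons, hu, mul_assoc])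
  have := h.perm.length_eq
  simp_all

end ShortestInCoset

section Conjugation

variable {Γ} {Λ : Set V} {v : V} {w : List (Letter G)}

theorem eq_nil_of_isShortestInCoset_of_not_isFirstLetter [∀ v, Nontrivial (G v)]
    (hred : Reduced Γ w) (hmin : IsShortestInCoset (spanSubgroup Γ G Λ) w)
    (hfirst : ∀ y, IsFirstLetter Γ y w → y.1 ≠ v ∧ ¬ Γ.Adj y.1 v)
    (hconj : vertexSubgroup Γ G v ≤ MulAut.conj (wordProd Γ w) • spanSubgroup Γ G Λ) :
    w = [] := by
  obtain ⟨x, hx⟩ := exists_ne (1 : G v)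
  have hxw : Reduced Γ (⟨v, x⟩ :: w) :=
    ⟨hx, (noFirstAt_iff Γ).mpr fun y hy => (hfirst y hy).1, hred⟩
  -- `w⁻¹ x w` is reduced as written, so by uniqueness of normal forms its letters lie in `Λ`
  have hconj_red : Reduced Γ (invRev w ++ ⟨v, x⟩ :: w) :=
    reduced_invRev_append Γ hred hxw fun y hy =>
      ⟨fun hvy => (hfirst y hy).1 hvy.symm, fun hyv => absurd hyv (hfirst y hy).2⟩
  have hmem : wordProd Γ (invRev w ++ ⟨v, x⟩ :: w) ∈ spanSubgroup Γ G Λ := by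
    have := Subgroup.mem_pointwise_smul_iff_inv_smul_mem.mp (hconj ⟨x, rfl⟩)
    simpa [mul_assoc] using this
  obtain ⟨w', hw', heq, hΛ⟩ := exists_reduced_of_mem_spanSubgroup Γ hmem
  have hperm := (shuffleEquiv_of_wordProd_eq Γ hconj_red hw' heq.symm).perm
  have hwΛ : wordProd Γ w ∈ spanSubgroup Γ G Λ := wordProd_mem_spanSubgroup Γ fun l hl =>
    hΛ l (hperm.mem_iff.mp (List.mem_append_right _ (.tail _ hl)))
  have := hmin [] _ (inv_mem hwΛ) (by simp)
  simpa using this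

theorem adj_of_isShortestInCoset [∀ v, Nontrivial (G v)] (hv : v ∈ Λ) (hred : Reduced Γ w)
    (hmin : IsShortestInCoset (spanSubgroup Γ G Λ) w)
    (hconj : vertexSubgroup Γ G v ≤ MulAut.conj (wordProd Γ w) • spanSubgroup Γ G Λ) :
    ∀ l ∈ w, Γ.Adj l.1 v := by
  induction hn : w.length using Nat.strong_induction_on generalizing w with
  | _ n ih =>
    have peel {y : Letter G} {t : List (Letter G)} (ht : ShuffleEquiv Γ w (y :: t))
        (hy : MulAut.conj (of Γ G y.1 y.2) • vertexSubgroup Γ G v = vertexSubgroup Γ G v) :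
        t.length < n ∧ ∀ l ∈ t, Γ.Adj l.1 v := by
      have hlen : t.length < n := by simp [← hn, ht.perm.length_eq]
      have hconj' := Subgroup.le_conj_smul_of_conj_smul_eq hy <| by
        rwa [ht.wordProd_eq, wordProd_cons] at hconj
      exact ⟨hlen, ih _ hlen ((ht.reduced_iff Γ).mp hred).2.2 (hmin.of_shuffleEquiv_cons ht)
        hconj' rfl⟩
    by_cases hadj : ∃ y, IsFirstLetter Γ y w ∧ Γ.Adj y.1 v
    · obtain ⟨y, hy, hyv⟩ := hadj
      obtain ⟨t, ht⟩ := hy.exists_shuffleEquiv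
      have ht_adj := (peel ht (conj_smul_vertexSubgroup_of_adj Γ hyv y.2)).2
      intro l hl
      rcases List.mem_cons.mp (ht.perm.mem_iff.mp hl) with rfl | hl
      exacts [hyv, ht_adj l hl]
    by_cases hsame : ∃ y, IsFirstLetter Γ y w ∧ y.1 = v
    · -- a first letter `⟨v, c⟩` commutes with the rest `t`, so `t = w c⁻¹` would be shorter
      exfalso
      obtain ⟨⟨_, c⟩, hy, rfl⟩ := hsame
      obtain ⟨t, ht⟩ := hy.exists_shuffleEquiv
      obtain ⟨hlen, ht_adj⟩ := peel ht (Subgroup.conj_smul_eq_self_of_mem ⟨c, rfl⟩)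
      have := hmin t _ (inv_mem (vertexSubgroup_le_spanSubgroup Γ hv ⟨c, rfl⟩)) <| by
        rw [ht.wordProd_eq, wordProd_cons, (commute_wordProd Γ ht_adj c).eq, mul_inv_cancel_right]
      omega
    push Not at hadj hsame
    rw [eq_nil_of_isShortestInCoset_of_not_isFirstLetter hred hmin
      (fun y hy => ⟨hsame y hy, hadj y hy⟩) hconj]
    simp

end Conjugation

end GraphProduct

open GraphProduct

theorem span_le_conj_span_general {V : Type}
    (Γ : SimpleGraph V) (G : V → Type) [∀ v, Group (G v)] [∀ v, Nontrivial (G v)]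
    (Λ₁ Λ₂ : Set V) (g : GraphProduct Γ G)
    (h : spanSubgroup Γ G Λ₁ ≤
      Subgroup.map (MulAut.conj g).toMonoidHom (spanSubgroup Γ G Λ₂)) :
    Λ₁ ⊆ Λ₂ ∧
      g ∈ (spanSubgroup Γ G Λ₁ : Set (GraphProduct Γ G)) *
        (spanSubgroup Γ G (linkSet Γ Λ₁) : Set (GraphProduct Γ G)) *
        (spanSubgroup Γ G Λ₂ : Set (GraphProduct Γ G)) := by
  change spanSubgroup Γ G Λ₁ ≤ MulAut.conj g • spanSubgroup Γ G Λ₂ at h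
  have hsub : Λ₁ ⊆ Λ₂ := subset_of_spanSubgroup_le_conj_smul Γ h
  obtain ⟨w, q, hq, hwq, hred, hmin⟩ :=
    exists_reduced_isShortestInCoset g (spanSubgroup Γ G Λ₂)
  have hconj :
      spanSubgroup Γ G Λ₁ ≤ MulAut.conj (wordProd Γ w) • spanSubgroup Γ G Λ₂ := by
    rwa [hwq, map_mul, mul_smul, Subgroup.conj_smul_eq_self_of_mem hq]
  have hlink : wordProd Γ w ∈ spanSubgroup Γ G (linkSet Γ Λ₁) :=
    wordProd_mem_spanSubgroup Γ fun l hl v hv => adj_of_isShortestInCoset (hsub hv) hred hmin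
      ((vertexSubgroup_le_spanSubgroup Γ hv).trans hconj) l hl
  have hg : g = 1 * wordProd Γ w * q⁻¹ := by rw [one_mul, hwq, mul_inv_cancel_right]
  exact ⟨hsub, hg ▸ Set.mul_mem_mul (Set.mul_mem_mul (one_mem _) hlink) (inv_mem hq)⟩

/-- **Lemma.** If `⟨Λ₁⟩ ⊆ g⟨Λ₂⟩g⁻¹` then `Λ₁ ⊆ Λ₂` and
`g ∈ ⟨Λ₁⟩ · ⟨link(Λ₁)⟩ · ⟨Λ₂⟩`. -/
theorem span_le_conj_span {V : Type} [Fintype V]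
    (Γ : SimpleGraph V) (G : V → Type) [∀ v, Group (G v)] [∀ v, Nontrivial (G v)]
    (Λ₁ Λ₂ : Set V) (g : GraphProduct Γ G)
    (h : spanSubgroup Γ G Λ₁ ≤
      Subgroup.map (MulAut.conj g).toMonoidHom (spanSubgroup Γ G Λ₂)) :
    Λ₁ ⊆ Λ₂ ∧
      g ∈ (spanSubgroup Γ G Λ₁ : Set (GraphProduct Γ G)) *
        (spanSubgroup Γ G (linkSet Γ Λ₁) : Set (GraphProduct Γ G)) *
        (spanSubgroup Γ G Λ₂ : Set (GraphProduct Γ G)) :=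
  span_le_conj_span_general Γ G Λ₁ Λ₂ g h
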